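/- arXiv:2301.05877 — 3 statements merged into one kernel-verified Lean document; each statement's English description precedes it below -/
import Mathlib

section
/- Let Λ be a graph, Λ' a subgraph of Λ, and suppose Λ is a forest relative to Λ'. If C is a connected component of Λ such that C ∩ Λ' ≠ ∅, then at most one connected component of C ∩ Λ' fails to be a tree (i.e., at most one connected component of C ∩ Λ' contains a reduced cycle). -/
/-- A combinatorial graph (Serre style): edges come with a fixed-point-free
reversal involution; loops and multiple edges are allowed. -/
structure SGraph where
  V : Type
  E : Type
  init : E → V
  bar : E → E
  bar_bar : ∀ e, bar (bar e) = e
  bar_ne : ∀ e, bar e ≠ e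

namespace SGraph

variable (G : SGraph)

/-- Terminal vertex of an edge. -/
def term (e : G.E) : G.V := G.init (G.bar e)

/-- Consecutive edges of the list match up. -/
def IsChain (l : List G.E) : Prop :=
  List.Chain' (fun e f => G.term e = G.init f) l

/-- A cycle: a nonempty closed edge path. -/
def IsCycle (l : List G.E) : Prop :=
  l ≠ [] ∧ G.IsChain l ∧
    ∀ e f, l.head? = some e → l.getLast? = some f → G.term f = G.init e

/-- A reduced cycle: no edge is followed (cyclically) by its reverse. -/
def IsReducedCycle (l : List G.E) : Prop :=
  G.IsCycle l ∧ List.Chain' (fun e f => f ≠ G.bar e) l ∧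
    ∀ e f, l.head? = some e → l.getLast? = some f → e ≠ G.bar f

/-- A graph is a forest if it contains no reduced cycle. -/
def IsForestGraph : Prop := ∀ l, ¬ G.IsReducedCycle l

/-- A subgraph: a set of vertices and a set of edges, closed under reversal,
with endpoints among the chosen vertices. -/
structure Subgraph (G : SGraph) where
  verts : Set G.V
  edges : Set G.E
  bar_mem : ∀ ⦃e⦄, e ∈ edges → G.bar e ∈ edges
  init_mem : ∀ ⦃e⦄, e ∈ edges → G.init e ∈ verts

variable {G}

namespace Subgraph

/-- Subgraph containment. -/
def le (H K : Subgraph G) : Prop := H.verts ⊆ K.verts ∧ H.edges ⊆ K.edges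

/-- Intersection of two subgraphs. -/
def inter (H K : Subgraph G) : Subgraph G where
  verts := H.verts ∩ K.verts
  edges := H.edges ∩ K.edges
  bar_mem := fun _ he => ⟨H.bar_mem he.1, K.bar_mem he.2⟩
  init_mem := fun _ he => ⟨H.init_mem he.1, K.init_mem he.2⟩

/-- All edges of the list lie in the subgraph. -/
def EdgesIn (H : Subgraph G) (l : List G.E) : Prop := ∀ e ∈ l, e ∈ H.edges

/-- A reduced cycle contained in the subgraph. -/
def IsReducedCycleIn (H : Subgraph G) (l : List G.E) : Prop :=
  G.IsReducedCycle l ∧ H.EdgesIn l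

/-- A subgraph is a forest if it contains no reduced cycle. -/
def IsForest (H : Subgraph G) : Prop := ∀ l, ¬ H.IsReducedCycleIn l

/-- Reachability inside a subgraph by edge paths. -/
inductive Reaches (H : Subgraph G) : G.V → G.V → Prop
  | refl (v : G.V) (hv : v ∈ H.verts) : Reaches H v v
  | step (e : G.E) (he : e ∈ H.edges) {q : G.V} (h : Reaches H (G.term e) q) :
      Reaches H (G.init e) q

/-- A subgraph is connected if it is nonempty and any two of its vertices are
joined by an edge path in it. -/
def Connected (H : Subgraph G) : Prop :=
  H.verts.Nonempty ∧ ∀ p ∈ H.verts, ∀ q ∈ H.verts, H.Reaches p q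

/-- A tree is a connected forest. -/
def IsTree (H : Subgraph G) : Prop := H.IsForest ∧ H.Connected

/-- `C` is a connected component of `H`: its vertices form a reachability class
of `H` and its edges are the induced ones. -/
def IsCompOf (C H : Subgraph G) : Prop :=
  ∃ v ∈ H.verts, C.verts = {w | H.Reaches v w} ∧
    C.edges = {e | e ∈ H.edges ∧ G.init e ∈ C.verts}

/-- `H` is a forest relative to `H'`: every reduced cycle of `H` is contained
in `H'`. -/
def ForestRel (H H' : Subgraph G) : Prop :=
  ∀ l, H.IsReducedCycleIn l → H'.EdgesIn l

/-- `H` is a strong forest relative to `H'`: a relative forest such that each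
component of `H` meets `H'` in an empty or connected subgraph. -/
def StrongForestRel (H H' : Subgraph G) : Prop :=
  H.ForestRel H' ∧
    ∀ C : Subgraph G, C.IsCompOf H → (C.inter H').verts = ∅ ∨ (C.inter H').Connected

/-- Euler characteristic: number of vertices minus number of (geometric)
edges; each geometric edge corresponds to a pair `{e, ē}`. -/
noncomputable def eulerChar (H : Subgraph G) : ℤ :=
  (H.verts.ncard : ℤ) - ((H.edges.ncard / 2 : ℕ) : ℤ)

/-- A walk in `H` from `p` to `q`, given as its list of traversed edges. -/
def IsWalk (H : Subgraph G) (p q : G.V) (l : List G.E) : Prop :=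
  H.EdgesIn l ∧ G.IsChain l ∧
    (∀ e, l.head? = some e → G.init e = p) ∧
    (∀ e, l.getLast? = some e → G.term e = q) ∧
    (l = [] → p = q ∧ p ∈ H.verts)

/-- The weight-0 subgraph of a zero/one-weighted subgraph: all of its vertices
together with its edges of weight 0. -/
def zeroSub (H : Subgraph G) (ω : G.E → ℕ) (hbar : ∀ e, ω (G.bar e) = ω e) :
    Subgraph G where
  verts := H.verts
  edges := {e | e ∈ H.edges ∧ ω e = 0}
  bar_mem := fun e he => ⟨H.bar_mem he.1, by rw [hbar]; exact he.2⟩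
  init_mem := fun _ he => H.init_mem he.1

end Subgraph

/-- The full subgraph of a graph. -/
def full (G : SGraph) : Subgraph G where
  verts := Set.univ
  edges := Set.univ
  bar_mem := fun _ _ => Set.mem_univ _
  init_mem := fun _ _ => Set.mem_univ _

open Classical in
/-- The quotient graph `G/H'` obtained by identifying the subgraph `H'` to a
single vertex `∗` (represented by `none`): its vertices are the vertices of
`G` not in `H'` together with `∗`; its edges are the edges of `G` not in `H'`,
with endpoints in `H'` replaced by `∗`. -/
noncomputable def quot (G : SGraph) (H' : Subgraph G) : SGraph where
  V := Option {v : G.V // v ∉ H'.verts}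
  E := {e : G.E // e ∉ H'.edges}
  init e := if h : G.init e.1 ∈ H'.verts then none else some ⟨G.init e.1, h⟩
  bar e := ⟨G.bar e.1, fun hc => e.2 (by simpa [G.bar_bar] using H'.bar_mem hc)⟩
  bar_bar e := Subtype.ext (G.bar_bar e.1)
  bar_ne e := fun hc => G.bar_ne e.1 (congrArg Subtype.val hc)

end SGraph

/-!
Suppose two components `D₁ ≠ D₂` of `C ∩ Λ'` both carry reduced cycles. Among all paths of `Λ`
from the base of a reduced cycle `c₁` of `D₁` to the base of a reduced cycle `c₂` of `D₂`
(the cycles being allowed to vary), take a shortest one, `l`. Minimality makes `l` reduced, and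
since a cycle can be rotated to absorb a backtrack at either end of `l`, it also makes the closed
path `c₁ l c₂ l⁻¹` a reduced cycle. As `Λ` is a forest relative to `Λ'`, that cycle, hence `l`,
lies in `Λ'`; and `l` stays in the component `C`, so it joins `D₁` to `D₂` inside `C ∩ Λ'`.
-/

theorem Cycle.chain_coe_iff {α : Type*} {R : α → α → Prop} {l : List α} :
    Cycle.Chain R l ↔
      l.IsChain R ∧ ∀ a b, l.head? = some a → l.getLast? = some b → R b a := by
  cases l with
  | nil => simp
  | cons a t =>
    rw [Cycle.chain_coe_cons, ← List.cons_append, List.isChain_append]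
    simp only [List.isChain_singleton, List.head?_cons, Option.mem_def, Option.some_inj,
      true_and]
    exact and_congr_right fun _ => ⟨fun h _ b hb hl => h b hl _ hb, fun h b hl y hy => h y b hy hl⟩

theorem Cycle.chain_append_of_overlap {α : Type*} {R : α → α → Prop} {A B C D : List α}
    (h₁ : (D ++ A ++ B).IsChain R) (h₂ : (B ++ C ++ D).IsChain R) (hB : B ≠ []) (hD : D ≠ []) :
    Cycle.Chain R ↑(A ++ B ++ C ++ D) := by
  have hAB : A ++ B ≠ [] := by simp [hB]
  rw [Cycle.chain_coe_iff, List.append_assoc (A ++ B)]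
  refine ⟨(h₁.infix ⟨D, [], by simp⟩).append_overlap (by simpa using h₂) hB, ?_⟩
  rw [List.head?_append_of_ne_nil _ hAB, List.getLast?_append_of_ne_nil _ (by simp [hD]),
    List.getLast?_append_of_ne_nil _ hD]
  rw [List.append_assoc] at h₁
  exact fun a b ha hb => (List.isChain_append.1 h₁).2.2 b hb a ha

namespace SGraph

variable {G : SGraph}

theorem init_bar (e : G.E) : G.init (G.bar e) = G.term e := rfl

theorem term_bar (e : G.E) : G.term (G.bar e) = G.init e := by
  rw [term, G.bar_bar]

section Paths

variable (G)

def rev (l : List G.E) : List G.E := (l.map G.bar).reverse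

def IsReduced (l : List G.E) : Prop := l.IsChain fun e f => f ≠ G.bar e

def IsCyclicallyReduced (l : List G.E) : Prop :=
  Cycle.Chain (fun e f => f ≠ G.bar e) (l : Cycle G.E)

def IsEdgePath : G.V → G.V → List G.E → Prop
  | v, w, [] => v = w
  | v, w, e :: l => G.init e = v ∧ IsEdgePath (G.term e) w l

end Paths

@[simp]
theorem rev_nil : G.rev [] = [] := rfl

theorem rev_cons (e : G.E) (l : List G.E) : G.rev (e :: l) = G.rev l ++ [G.bar e] := by
  simp [rev]

@[simp]
theorem rev_rev (l : List G.E) : G.rev (G.rev l) = l := by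
  simp [rev, List.map_reverse, Function.comp_def, G.bar_bar]

@[simp]
theorem length_rev (l : List G.E) : (G.rev l).length = l.length := by
  simp [rev]

@[simp]
theorem rev_eq_nil {l : List G.E} : G.rev l = [] ↔ l = [] := by
  simp [rev]

theorem IsReduced.rev {l : List G.E} (h : G.IsReduced l) : G.IsReduced (G.rev l) := by
  rw [IsReduced, SGraph.rev, List.isChain_reverse, List.isChain_map]
  refine h.imp fun e f hef hfe => hef ?_
  rw [G.bar_bar] at hfe
  exact hfe.symm

theorem IsCyclicallyReduced.isReduced {l : List G.E} (h : G.IsCyclicallyReduced l) :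
    G.IsReduced l :=
  (Cycle.chain_coe_iff.1 h).1

theorem IsCyclicallyReduced.of_isRotated {l l' : List G.E} (h : G.IsCyclicallyReduced l)
    (hl : l ~r l') : G.IsCyclicallyReduced l' := by
  rwa [IsCyclicallyReduced, ← Cycle.coe_eq_coe.2 hl]

theorem isReduced_of_minimal {P : List G.E → Prop}
    (hP : ∀ a b e, P (a ++ e :: G.bar e :: b) → P (a ++ b)) {l : List G.E} (hl : P l)
    (hmin : ∀ l', P l' → l.length ≤ l'.length) : G.IsReduced l := by
  rw [IsReduced, List.isChain_iff_forall_rel_of_append_cons_cons]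
  rintro e f a b rfl rfl
  have := hmin _ (hP a b e hl)
  simp at this

@[simp]
theorem isEdgePath_nil {v w : G.V} : G.IsEdgePath v w [] ↔ v = w := Iff.rfl

@[simp]
theorem isEdgePath_cons {v w : G.V} {e : G.E} {l : List G.E} :
    G.IsEdgePath v w (e :: l) ↔ G.init e = v ∧ G.IsEdgePath (G.term e) w l := Iff.rfl

theorem isEdgePath_append {u w : G.V} {l₁ l₂ : List G.E} :
    G.IsEdgePath u w (l₁ ++ l₂) ↔ ∃ v, G.IsEdgePath u v l₁ ∧ G.IsEdgePath v w l₂ := by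
  induction l₁ generalizing u with
  | nil => simp
  | cons e l₁ ih => simp [ih, and_assoc]

namespace IsEdgePath

variable {u v w : G.V} {l : List G.E}

theorem append {l₁ l₂ : List G.E} (h₁ : G.IsEdgePath u v l₁) (h₂ : G.IsEdgePath v w l₂) :
    G.IsEdgePath u w (l₁ ++ l₂) :=
  isEdgePath_append.2 ⟨v, h₁, h₂⟩

theorem rev (h : G.IsEdgePath v w l) : G.IsEdgePath w v (G.rev l) := by
  induction l generalizing v with
  | nil => exact h.symm
  | cons e l ih =>
    rw [rev_cons]
    exact (ih h.2).append (by simp [h.1, init_bar, term_bar])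

theorem cancel {a b : List G.E} {e : G.E} (h : G.IsEdgePath u w (a ++ e :: G.bar e :: b)) :
    G.IsEdgePath u w (a ++ b) := by
  obtain ⟨v, ha, he, -, hb⟩ := isEdgePath_append.1 h
  rw [term_bar, he] at hb
  exact ha.append hb

theorem isChain (h : G.IsEdgePath v w l) : l.IsChain fun e f => G.term e = G.init f := by
  induction l generalizing v with
  | nil => exact .nil
  | cons e l ih =>
    refine (ih h.2).cons fun f hf => ?_
    cases l with
    | nil => simp at hf
    | cons => simp_all

theorem init_head {e : G.E} (h : G.IsEdgePath v w l) (he : e ∈ l.head?) : G.init e = v := by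
  cases l <;> simp_all

theorem term_getLast {e : G.E} (h : G.IsEdgePath v w l) (he : e ∈ l.getLast?) :
    G.term e = w := by
  induction l generalizing v with
  | nil => simp at he
  | cons f l ih =>
    cases l with
    | nil => simp_all
    | cons => exact ih h.2 (by simpa using he)

end IsEdgePath

theorem isEdgePath_of_isChain {l : List G.E} (hl : l.IsChain fun e f => G.term e = G.init f)
    {e f : G.E} (he : e ∈ l.head?) (hf : f ∈ l.getLast?) :
    G.IsEdgePath (G.init e) (G.term f) l := by
  induction l generalizing e with
  | nil => simp at he
  | cons g l ih =>
    obtain rfl : g = e := by simpa using he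
    cases l with
    | nil => simp_all
    | cons g' l =>
      rw [List.isChain_cons_cons] at hl
      exact ⟨rfl, hl.1 ▸ ih hl.2 rfl (by simpa using hf)⟩

theorem isReducedCycle_iff {l : List G.E} :
    G.IsReducedCycle l ↔ l ≠ [] ∧ (∃ v, G.IsEdgePath v v l) ∧ G.IsCyclicallyReduced l := by
  simp only [IsReducedCycle, IsCycle, IsCyclicallyReduced, Cycle.chain_coe_iff, SGraph.IsChain]
  constructor
  · rintro ⟨⟨hne, hch, hwrap⟩, hred⟩
    obtain ⟨e, he⟩ := Option.ne_none_iff_exists'.1 (mt List.head?_eq_none_iff.1 hne)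
    obtain ⟨f, hf⟩ := Option.ne_none_iff_exists'.1 (mt List.getLast?_eq_none_iff.1 hne)
    refine ⟨hne, ⟨G.init e, ?_⟩, hred⟩
    simpa only [hwrap e f he hf] using isEdgePath_of_isChain hch he hf
  · rintro ⟨hne, ⟨v, hv⟩, hred⟩
    refine ⟨⟨hne, hv.isChain, fun e f he hf => ?_⟩, hred⟩
    rw [hv.term_getLast hf, hv.init_head he]

namespace Subgraph

variable {H C D₁ D₂ : Subgraph G} {u v w : G.V}

structure IsReducedCycleAt (H : Subgraph G) (u : G.V) (c : List G.E) : Prop where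
  ne_nil : c ≠ []
  isEdgePath : G.IsEdgePath u u c
  isCyclicallyReduced : G.IsCyclicallyReduced c
  edgesIn : H.EdgesIn c

theorem exists_isReducedCycleAt_of_not_isForest (h : ¬ H.IsForest) :
    ∃ u c, H.IsReducedCycleAt u c := by
  simp only [IsForest, IsReducedCycleIn, not_forall, not_not] at h
  obtain ⟨c, hc, hcH⟩ := h
  obtain ⟨hne, ⟨u, hu⟩, hred⟩ := isReducedCycle_iff.1 hc
  exact ⟨u, c, hne, hu, hred, hcH⟩

namespace IsReducedCycleAt

variable {c t : List G.E} {e : G.E}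

theorem mem_verts (h : H.IsReducedCycleAt u c) : u ∈ H.verts := by
  obtain ⟨e, t, rfl⟩ := List.exists_cons_of_ne_nil h.ne_nil
  rw [← h.isEdgePath.1]
  exact H.init_mem (h.edgesIn e List.mem_cons_self)

theorem rotate_cons (h : H.IsReducedCycleAt u (e :: t)) :
    H.IsReducedCycleAt (G.term e) (t ++ [e]) where
  ne_nil := by simp
  isEdgePath := h.isEdgePath.2.append (by simp [h.isEdgePath.1])
  isCyclicallyReduced := h.isCyclicallyReduced.of_isRotated (List.isRotated_concat e t).symm
  edgesIn f hf := h.edgesIn f ((List.isRotated_concat e t).perm.subset hf)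

theorem rotate_concat (h : H.IsReducedCycleAt u (t ++ [e])) :
    H.IsReducedCycleAt (G.init e) (e :: t) where
  ne_nil := by simp
  isEdgePath := by
    obtain ⟨v, ht, rfl, hu⟩ := isEdgePath_append.1 h.isEdgePath
    rw [isEdgePath_nil] at hu
    exact ⟨rfl, hu ▸ ht⟩
  isCyclicallyReduced := h.isCyclicallyReduced.of_isRotated (List.isRotated_concat e t)
  edgesIn f hf := h.edgesIn f ((List.isRotated_concat e t).perm.symm.subset hf)

theorem isReduced_rev_append_append (hc : H.IsReducedCycleAt u c) {l : List G.E}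
    (hl : G.IsEdgePath u w l) (hred : G.IsReduced l)
    (hmin : ∀ u' c' l', H.IsReducedCycleAt u' c' → G.IsEdgePath u' w l' →
      l.length ≤ l'.length) :
    G.IsReduced (G.rev l ++ c ++ l) := by
  cases l with
  | nil => simpa using hc.isCyclicallyReduced.isReduced
  | cons e l =>
    have hshort : ∀ c', ¬ H.IsReducedCycleAt (G.term e) c' := fun c' hc' => by
      simpa using hmin _ c' l hc' hl.2
    refine (hred.rev.append hc.isCyclicallyReduced.isReduced ?_).append_overlap
      (hc.isCyclicallyReduced.isReduced.append hred ?_) hc.ne_nil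
    · intro x hx y hy hyx
      rw [rev_cons, List.getLast?_concat, Option.mem_some_iff] at hx
      rw [hyx, ← hx, G.bar_bar] at hy
      obtain ⟨t, rfl⟩ := List.head?_eq_some_iff.1 hy
      exact hshort _ hc.rotate_cons
    · intro x hx y hy hyx
      obtain rfl : y = e := by simpa using hy.symm
      obtain ⟨t, rfl⟩ := List.getLast?_eq_some_iff.1 hx
      have hxe : x = G.bar y := by rw [hyx, G.bar_bar]
      exact hshort _ (hxe ▸ hc.rotate_concat)

end IsReducedCycleAt

theorem ext {K : Subgraph G} (hv : H.verts = K.verts) (he : H.edges = K.edges) : H = K := by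
  cases H; cases K; simp_all

theorem Reaches.mem_right (h : H.Reaches v w) : w ∈ H.verts := by
  induction h with
  | refl v hv => exact hv
  | step _ _ _ ih => exact ih

theorem Reaches.trans (h₁ : H.Reaches u v) (h₂ : H.Reaches v w) : H.Reaches u w := by
  induction h₁ with
  | refl => exact h₂
  | step e he _ ih => exact .step e he (ih h₂)

theorem Reaches.symm (h : H.Reaches v w) : H.Reaches w v := by
  induction h with
  | refl v hv => exact .refl v hv
  | step e he h ih =>
    refine ih.trans (.step (G.bar e) (H.bar_mem he) ?_)
    rw [term_bar]
    exact .refl _ (H.init_mem he)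

theorem Reaches.exists_isEdgePath (h : H.Reaches v w) :
    ∃ l, G.IsEdgePath v w l ∧ H.EdgesIn l := by
  induction h with
  | refl v _ => exact ⟨[], rfl, by simp [EdgesIn]⟩
  | step e he _ ih =>
    obtain ⟨l, hl, hlH⟩ := ih
    exact ⟨e :: l, ⟨rfl, hl⟩, List.forall_mem_cons.2 ⟨he, hlH⟩⟩

theorem _root_.SGraph.IsEdgePath.reaches {l : List G.E} (hl : G.IsEdgePath v w l)
    (hlH : H.EdgesIn l) (hv : v ∈ H.verts) : H.Reaches v w := by
  induction l generalizing v with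
  | nil => exact hl ▸ .refl v hv
  | cons e l ih =>
    obtain ⟨rfl, hl⟩ := hl
    have he := hlH e List.mem_cons_self
    exact .step e he (ih hl (fun f hf => hlH f (List.mem_cons_of_mem e hf))
      (H.init_mem (H.bar_mem he)))

namespace IsCompOf

theorem verts_subset (h : C.IsCompOf H) : C.verts ⊆ H.verts := by
  obtain ⟨b, -, hv, -⟩ := h
  exact hv ▸ fun _ => Reaches.mem_right

theorem reaches (h : C.IsCompOf H) (hv : v ∈ C.verts) (hw : w ∈ C.verts) : H.Reaches v w := by
  obtain ⟨b, -, hC, -⟩ := h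
  rw [hC] at hv hw
  exact hv.symm.trans hw

theorem eq_of_reaches (h₁ : D₁.IsCompOf H) (h₂ : D₂.IsCompOf H) (hv : v ∈ D₁.verts)
    (hw : w ∈ D₂.verts) (hvw : H.Reaches v w) : D₁ = D₂ := by
  have hverts : D₁.verts = D₂.verts := by
    obtain ⟨b₁, -, hD₁, -⟩ := h₁
    obtain ⟨b₂, -, hD₂, -⟩ := h₂
    rw [hD₁] at hv ⊢
    rw [hD₂] at hw ⊢
    have hb : H.Reaches b₁ b₂ := (hv.trans hvw).trans hw.symm
    ext x
    exact ⟨hb.symm.trans, hb.trans⟩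
  obtain ⟨-, -, -, he₁⟩ := h₁
  obtain ⟨-, -, -, he₂⟩ := h₂
  exact ext hverts (by rw [he₁, he₂, hverts])

theorem edgesIn_of_isEdgePath (h : C.IsCompOf H) {l : List G.E} (hl : G.IsEdgePath v w l)
    (hlH : H.EdgesIn l) (hv : v ∈ C.verts) : C.EdgesIn l := by
  obtain ⟨-, -, -, hedges⟩ := h
  induction l generalizing v with
  | nil => simp [EdgesIn]
  | cons e l ih =>
    obtain ⟨rfl, hl⟩ := hl
    have he : e ∈ C.edges := hedges ▸ ⟨hlH e List.mem_cons_self, hv⟩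
    exact List.forall_mem_cons.2 ⟨he, ih hl (fun f hf => hlH f (List.mem_cons_of_mem e hf))
      (C.init_mem (C.bar_mem he))⟩

end IsCompOf

theorem ForestRel.exists_isEdgePath_edgesIn {Λ' : Subgraph G}
    (hrel : G.full.ForestRel Λ') {u₁ u₂ : G.V} {c₁ c₂ l₀ : List G.E}
    (hc₁ : D₁.IsReducedCycleAt u₁ c₁) (hc₂ : D₂.IsReducedCycleAt u₂ c₂)
    (hl₀ : G.IsEdgePath u₁ u₂ l₀) :
    ∃ v₁ v₂ l, v₁ ∈ D₁.verts ∧ v₂ ∈ D₂.verts ∧ G.IsEdgePath v₁ v₂ l ∧ Λ'.EdgesIn l := by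
  let S : Set (List G.E) := {l | ∃ u₁ c₁ u₂ c₂, D₁.IsReducedCycleAt u₁ c₁ ∧
    D₂.IsReducedCycleAt u₂ c₂ ∧ G.IsEdgePath u₁ u₂ l}
  obtain ⟨l, ⟨u₁, c₁, u₂, c₂, hc₁, hc₂, hl⟩, hmin⟩ :=
    (measure List.length).wf.has_min S ⟨l₀, u₁, c₁, u₂, c₂, hc₁, hc₂, hl₀⟩
  replace hmin : ∀ l' ∈ S, l.length ≤ l'.length := fun l' hl' => not_lt.1 (hmin l' hl')
  have hred : G.IsReduced l := isReduced_of_minimal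
    (fun _ _ _ ⟨u₁, c₁, u₂, c₂, hc₁, hc₂, hl⟩ => ⟨u₁, c₁, u₂, c₂, hc₁, hc₂, hl.cancel⟩)
    ⟨u₁, c₁, u₂, c₂, hc₁, hc₂, hl⟩ hmin
  have hred₁ : G.IsReduced (G.rev l ++ c₁ ++ l) :=
    hc₁.isReduced_rev_append_append hl hred fun u c l' hc hl' =>
      hmin l' ⟨u, c, u₂, c₂, hc, hc₂, hl'⟩
  have hred₂ : G.IsReduced (l ++ c₂ ++ G.rev l) := by
    simpa using hc₂.isReduced_rev_append_append hl.rev hred.rev fun u c l' hc hl' => by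
      simpa using hmin (G.rev l') ⟨u₁, c₁, u, c, hc₁, hc, hl'.rev⟩
  refine ⟨u₁, u₂, l, hc₁.mem_verts, hc₂.mem_verts, hl, ?_⟩
  rcases eq_or_ne l [] with rfl | hne
  · simp [EdgesIn]
  have hW : G.IsReducedCycle (c₁ ++ l ++ c₂ ++ G.rev l) := isReducedCycle_iff.2
    ⟨by simp [hc₁.ne_nil], ⟨u₁, ((hc₁.isEdgePath.append hl).append hc₂.isEdgePath).append hl.rev⟩,
      Cycle.chain_append_of_overlap hred₁ hred₂ hne (by simpa using hne)⟩
  exact fun e he => hrel _ ⟨hW, fun _ _ => trivial⟩ e (by simp [he])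

end Subgraph

end SGraph

theorem at_most_one_non_tree_component_general
    (G : SGraph)
    (Λ' C : SGraph.Subgraph G)
    (hrel : (G.full).ForestRel Λ')
    (hC : C.IsCompOf G.full) :
    ∀ D₁ D₂ : SGraph.Subgraph G,
      D₁.IsCompOf (C.inter Λ') → D₂.IsCompOf (C.inter Λ') →
      ¬ D₁.IsForest → ¬ D₂.IsForest → D₁ = D₂ := by
  intro D₁ D₂ hD₁ hD₂ hT₁ hT₂
  obtain ⟨u₁, c₁, hc₁⟩ := SGraph.Subgraph.exists_isReducedCycleAt_of_not_isForest hT₁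
  obtain ⟨u₂, c₂, hc₂⟩ := SGraph.Subgraph.exists_isReducedCycleAt_of_not_isForest hT₂
  obtain ⟨l₀, hl₀, -⟩ := (hC.reaches (hD₁.verts_subset hc₁.mem_verts).1
    (hD₂.verts_subset hc₂.mem_verts).1).exists_isEdgePath
  obtain ⟨v₁, v₂, l, hv₁, hv₂, hl, hlΛ'⟩ := hrel.exists_isEdgePath_edgesIn hc₁ hc₂ hl₀
  have hv₁C := hD₁.verts_subset hv₁
  have hlC : C.EdgesIn l := hC.edgesIn_of_isEdgePath hl (fun _ _ => trivial) hv₁C.1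
  exact hD₁.eq_of_reaches hD₂ hv₁ hv₂ (hl.reaches (fun e he => ⟨hlC e he, hlΛ' e he⟩) hv₁C)

/-- If a graph `Λ` (here: the full subgraph of `G`) is a forest
relative to a subgraph `Λ'`, and `C` is a connected component of `Λ` with
`C ∩ Λ'` nonempty, then at most one connected component of `C ∩ Λ'` fails to
be a tree, i.e. contains a reduced cycle. -/
theorem at_most_one_non_tree_component
    (G : SGraph) [Fintype G.V] [Fintype G.E]
    (Λ' C : SGraph.Subgraph G)
    (hsub : Λ'.le G.full)
    (hrel : (G.full).ForestRel Λ')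
    (hC : C.IsCompOf G.full)
    (hne : (C.inter Λ').verts.Nonempty) :
    ∀ D₁ D₂ : SGraph.Subgraph G,
      D₁.IsCompOf (C.inter Λ') → D₂.IsCompOf (C.inter Λ') →
      ¬ D₁.IsForest → ¬ D₂.IsForest → D₁ = D₂ :=
  at_most_one_non_tree_component_general G Λ' C hrel hC
end

section
/- Let C be a finite connected graph and A a nonempty connected subgraph of C such that C is a tree relative to A (that is, every reduced cycle of C is contained in A). Then χ(C) = χ(A), where χ denotes the Euler characteristic (number of vertices minus number of edges). -/
/-!
Induction on the number of edges. If every edge lies in `A`, connectivity forces the graph to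
equal `A`. Otherwise take a longest reduced path of edges outside `A`: it exists because such a
path cannot repeat an edge (a repetition yields a reduced cycle outside `A`). Its two ends cannot
both lie in `A`, for then closing the path up through `A` would produce a reduced cycle leaving
`A`. An end outside `A` is a leaf by maximality, and deleting it together with its edge lowers
both counts by one and preserves the hypotheses.
-/

theorem List.isChain_and_iff {α : Type*} {R S : α → α → Prop} {l : List α} :
    l.IsChain (fun a b => R a b ∧ S a b) ↔ l.IsChain R ∧ l.IsChain S := by
  induction l using List.twoStepInduction <;> grind

namespace SGraph

variable {G : SGraph}

theorem bar_injective : Function.Injective G.bar :=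
  Function.LeftInverse.injective G.bar_bar

variable (G) in
def Follows (e f : G.E) : Prop := G.term e = G.init f ∧ f ≠ G.bar e

theorem follows_bar_bar {e f : G.E} : G.Follows (G.bar f) (G.bar e) ↔ G.Follows e f := by
  rw [Follows, Follows, term_bar, G.bar_bar, eq_comm, ne_comm]
  rfl

theorem isChain_iff {l : List G.E} :
    G.IsChain l ↔ l.IsChain (fun e f => G.term e = G.init f) :=
  Iff.rfl

theorem isChain_follows_iff {l : List G.E} :
    l.IsChain G.Follows ↔ G.IsChain l ∧ l.IsChain (fun e f => f ≠ G.bar e) :=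
  List.isChain_and_iff

theorem isReducedCycle_iff_s6 {l : List G.E} :
    G.IsReducedCycle l ↔ l ≠ [] ∧ l.IsChain G.Follows ∧
      ∀ e ∈ l.head?, ∀ f ∈ l.getLast?, G.Follows f e := by
  simp only [IsReducedCycle, IsCycle, isChain_follows_iff, Follows, Option.mem_def]
  constructor
  · rintro ⟨⟨hne, hc, hcl⟩, hr, hrl⟩
    exact ⟨hne, ⟨hc, hr⟩, fun e he f hf => ⟨hcl e f he hf, hrl e f he hf⟩⟩
  · rintro ⟨hne, ⟨hc, hr⟩, hcl⟩
    exact ⟨⟨hne, hc, fun e f he hf => (hcl e he f hf).1⟩, hr,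
      fun e f he hf => (hcl e he f hf).2⟩

theorem exists_isReducedCycle_of_not_nodup {l : List G.E} (hl : l.IsChain G.Follows)
    (hd : ¬ l.Nodup) : ∃ c, G.IsReducedCycle c ∧ c ⊆ l := by
  obtain ⟨x, hx⟩ := not_forall_not.mp (mt List.nodup_iff_sublist.mpr hd)
  obtain ⟨r₁, r₂, rfl, hx₁, hx₂⟩ := List.cons_sublist_iff.mp hx
  obtain ⟨s₁, s₂, rfl⟩ := List.append_of_mem hx₁
  obtain ⟨t₁, t₂, rfl⟩ := List.append_of_mem (List.singleton_sublist.mp hx₂)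
  have hinf : (x :: (s₂ ++ t₁)) ++ [x] <:+: s₁ ++ x :: s₂ ++ (t₁ ++ x :: t₂) :=
    ⟨s₁, t₂, by simp⟩
  obtain ⟨hc, -, hclose⟩ := List.isChain_append.mp (hl.infix hinf)
  refine ⟨x :: (s₂ ++ t₁), isReducedCycle_iff_s6.mpr ⟨List.cons_ne_nil _ _, hc, ?_⟩, ?_⟩
  · rintro e ⟨⟩ f hf
    exact hclose f hf x rfl
  · intro y hy
    simp only [List.mem_cons, List.mem_append, List.append_assoc, List.cons_append] at hy ⊢
    tauto

theorem exists_isReducedCycle_of_closed {l : List G.E} (hne : l ≠ []) (hl : l.IsChain G.Follows)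
    (hcl : ∀ e ∈ l.head?, ∀ f ∈ l.getLast?, G.term f = G.init e) :
    ∃ c, G.IsReducedCycle c ∧ c ⊆ l := by
  induction hn : l.length using Nat.strong_induction_on generalizing l with
  | _ n ih =>
  by_cases hred : ∀ e ∈ l.head?, ∀ f ∈ l.getLast?, e ≠ G.bar f
  · refine ⟨l, isReducedCycle_iff_s6.mpr ⟨hne, hl, ?_⟩, List.Subset.refl l⟩
    exact fun e he f hf => ⟨hcl e he f hf, hred e he f hf⟩
  -- the closed walk starts with `f̄` and ends with `f`: drop both and recurse
  push Not at hred
  obtain ⟨_, ha, f, hf, rfl⟩ := hred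
  obtain ⟨a, t, rfl⟩ := List.exists_cons_of_ne_nil hne
  obtain rfl : a = G.bar f := by simpa using ha
  rcases List.eq_nil_or_concat' t with rfl | ⟨m, f', rfl⟩
  · exact absurd (by simpa using hf) (G.bar_ne f)
  obtain rfl : f = f' := by
    rw [← List.cons_append, List.getLast?_concat] at hf
    simpa using hf.symm
  have hm : m ≠ [] := by
    rintro rfl
    simp [Follows, G.bar_bar] at hl
  rw [← List.cons_append, ← List.singleton_append, List.isChain_append,
    List.isChain_append] at hl
  obtain ⟨⟨-, hlm, hstart⟩, -, hend⟩ := hl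
  have hmcl : ∀ e ∈ m.head?, ∀ e' ∈ m.getLast?, G.term e' = G.init e := by
    intro e he e' he'
    rw [(hend e' (List.mem_getLast?_append_of_mem_getLast? he') f rfl).1, ← term_bar,
      (hstart (G.bar f) rfl e he).1]
  obtain ⟨c, hc, hcm⟩ := ih m.length (by simp [← hn]) hm hlm hmcl rfl
  exact ⟨c, hc, fun x hx => by simp [hcm hx]⟩

theorem isReducedCycle_append {l p : List G.E} (hl₀ : l ≠ []) (hp₀ : p ≠ [])
    (hl : l.IsChain G.Follows) (hp : p.IsChain G.Follows)
    (hlp : ∀ e ∈ l.getLast?, ∀ f ∈ p.head?, G.Follows e f)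
    (hpl : ∀ e ∈ p.getLast?, ∀ f ∈ l.head?, G.Follows e f) : G.IsReducedCycle (l ++ p) := by
  refine isReducedCycle_iff_s6.mpr ⟨by simp [hl₀], List.isChain_append.mpr ⟨hl, hp, hlp⟩, ?_⟩
  rw [List.head?_append_of_ne_nil _ hl₀, List.getLast?_append_of_ne_nil _ hp₀]
  exact fun e he f hf => hpl f hf e he

namespace Subgraph

theorem term_mem {H : Subgraph G} {e : G.E} (he : e ∈ H.edges) : G.term e ∈ H.verts :=
  H.init_mem (H.bar_mem he)

theorem isWalk_nil_iff {H : Subgraph G} {p q : G.V} :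
    H.IsWalk p q [] ↔ p = q ∧ p ∈ H.verts := by
  simp [IsWalk, EdgesIn, isChain_iff]

theorem isWalk_cons_iff {H : Subgraph G} {p q : G.V} {e : G.E} {l : List G.E} :
    H.IsWalk p q (e :: l) ↔ e ∈ H.edges ∧ G.init e = p ∧ H.IsWalk (G.term e) q l := by
  rcases l with _ | ⟨b, t⟩
  · simpa [IsWalk, EdgesIn, isChain_iff] using fun he _ _ => H.term_mem he
  · simp only [IsWalk, EdgesIn, isChain_iff]
    grind

theorem Reaches.exists_reduced_isWalk {H : Subgraph G} {p q : G.V} (h : H.Reaches p q) :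
    ∃ l, H.IsWalk p q l ∧ l.IsChain G.Follows := by
  induction h with
  | refl v hv => exact ⟨[], isWalk_nil_iff.mpr ⟨rfl, hv⟩, .nil⟩
  | step e he _ ih =>
    obtain ⟨l, hw, hl⟩ := ih
    rcases l with _ | ⟨b, t⟩
    · exact ⟨[e], isWalk_cons_iff.mpr ⟨he, rfl, hw⟩, .singleton e⟩
    obtain ⟨-, hb, hwt⟩ := isWalk_cons_iff.mp hw
    by_cases hbe : b = G.bar e
    · rw [hbe, term_bar] at hwt
      exact ⟨t, hwt, hl.tail⟩
    · exact ⟨e :: b :: t, isWalk_cons_iff.mpr ⟨he, rfl, hw⟩,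
        hl.cons_cons ⟨hb.symm, hbe⟩⟩

theorem bar_mem_edges_iff {H : Subgraph G} {e : G.E} : G.bar e ∈ H.edges ↔ e ∈ H.edges :=
  ⟨fun h => G.bar_bar e ▸ H.bar_mem h, fun h => H.bar_mem h⟩

def IsPendant (H : Subgraph G) (f : G.E) : Prop :=
  ∀ g ∈ H.edges, G.init g = G.term f → g = G.bar f

def IsOutWalk (H A : Subgraph G) (l : List G.E) : Prop :=
  l.IsChain G.Follows ∧ ∀ e ∈ l, e ∈ H.edges \ A.edges

section OutWalk

variable {H A : Subgraph G} {l : List G.E}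

theorem IsOutWalk.reverse (hl : IsOutWalk H A l) : IsOutWalk H A (l.reverse.map G.bar) := by
  refine ⟨?_, ?_⟩
  · rw [List.isChain_map, List.isChain_reverse]
    exact hl.1.imp fun _ _ => follows_bar_bar.mpr
  · simp only [List.mem_map, List.mem_reverse]
    rintro _ ⟨e, he, rfl⟩
    exact ⟨bar_mem_edges_iff.mpr (hl.2 e he).1, mt bar_mem_edges_iff.mp (hl.2 e he).2⟩

theorem IsOutWalk.concat (hl : IsOutWalk H A l) {f g : G.E} (hf : f ∈ l.getLast?)
    (hg : g ∈ H.edges \ A.edges) (hfg : G.Follows f g) : IsOutWalk H A (l ++ [g]) := by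
  refine ⟨List.isChain_append.mpr ⟨hl.1, .singleton g, ?_⟩, ?_⟩
  · rintro f' hf' _ ⟨⟩
    rwa [Option.mem_unique hf' hf]
  · intro e he
    rcases List.mem_append.mp he with he | he
    exacts [hl.2 e he, List.mem_singleton.mp he ▸ hg]

theorem IsOutWalk.false_of_isReducedCycle (hrel : H.ForestRel A) (hl : IsOutWalk H A l)
    {c : List G.E} (hc : G.IsReducedCycle c) (hcl : c ⊆ l) : False := by
  obtain ⟨e, he⟩ := List.exists_mem_of_ne_nil c hc.1.1
  exact (hl.2 e (hcl he)).2 (hrel c ⟨hc, fun x hx => (hl.2 x (hcl hx)).1⟩ e he)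

theorem IsOutWalk.nodup (hrel : H.ForestRel A) (hl : IsOutWalk H A l) : l.Nodup := by
  by_contra hd
  obtain ⟨c, hc, hcl⟩ := exists_isReducedCycle_of_not_nodup hl.1 hd
  exact hl.false_of_isReducedCycle hrel hc hcl

theorem exists_longest_isOutWalk [Finite G.E] (hrel : H.ForestRel A) :
    ∃ l, IsOutWalk H A l ∧ ∀ l', IsOutWalk H A l' → l'.length ≤ l.length := by
  classical
  have := Fintype.ofFinite G.E
  let P : ℕ → Prop := fun n => ∃ l, IsOutWalk H A l ∧ l.length = n
  have hP : P 0 := ⟨[], ⟨.nil, by simp⟩, rfl⟩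
  obtain ⟨l, hl, hlen⟩ := Nat.findGreatest_spec (Nat.zero_le (Fintype.card G.E)) hP
  exact ⟨l, hl, fun l' hl' =>
    hlen ▸ Nat.le_findGreatest (hl'.nodup hrel).length_le_card ⟨l', hl', rfl⟩⟩

theorem IsOutWalk.isPendant_of_longest (hl : IsOutWalk H A l)
    (hmax : ∀ l', IsOutWalk H A l' → l'.length ≤ l.length) {f : G.E} (hf : f ∈ l.getLast?)
    (hw : G.term f ∉ A.verts) : H.IsPendant f := by
  intro g hg hgf
  by_contra hne
  have := hmax _ (hl.concat hf ⟨hg, fun hgA => hw (hgf ▸ A.init_mem hgA)⟩ ⟨hgf.symm, hne⟩)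
  simp at this

theorem IsOutWalk.init_notMem_or_term_notMem (hA : A.Connected) (hrel : H.ForestRel A)
    (hAH : A.le H) (hl : IsOutWalk H A l) {e f : G.E} (he : e ∈ l.head?) (hf : f ∈ l.getLast?) :
    G.init e ∉ A.verts ∨ G.term f ∉ A.verts := by
  by_contra! ⟨hv, hw⟩
  have hl₀ : l ≠ [] := by rintro rfl; simp at he
  obtain ⟨p, hp, hpc⟩ := (hA.2 _ hw _ hv).exists_reduced_isWalk
  rcases p with _ | ⟨b, t⟩
  · have hcl : ∀ e' ∈ l.head?, ∀ f' ∈ l.getLast?, G.term f' = G.init e' := by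
      intro e' he' f' hf'
      rw [Option.mem_unique he' he, Option.mem_unique hf' hf, (isWalk_nil_iff.mp hp).1]
    obtain ⟨c, hc, hcl⟩ := exists_isReducedCycle_of_closed hl₀ hl.1 hcl
    exact hl.false_of_isReducedCycle hrel hc hcl
  · -- an outside walk closed up by a walk inside `A` is a reduced cycle leaving `A`
    obtain ⟨hbA, hbw, -⟩ := isWalk_cons_iff.mp hp
    have hcyc : G.IsReducedCycle (l ++ b :: t) := by
      refine isReducedCycle_append hl₀ (List.cons_ne_nil b t) hl.1 hpc ?_ ?_
      · rintro f' hf' _ ⟨⟩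
        rw [Option.mem_unique hf' hf]
        exact ⟨hbw.symm, fun h => (hl.2 f (List.mem_of_mem_getLast? hf)).2
          (bar_mem_edges_iff.mp (h ▸ hbA))⟩
      · intro z hz e' he'
        rw [Option.mem_unique he' he]
        exact ⟨hp.2.2.2.1 z hz, fun h => (hl.2 e (List.mem_of_mem_head? he)).2
          (h ▸ bar_mem_edges_iff.mpr (hp.1 z (List.mem_of_mem_getLast? hz)))⟩
    have hlpH : H.EdgesIn (l ++ b :: t) := by
      intro x hx
      rcases List.mem_append.mp hx with hx | hx
      exacts [(hl.2 x hx).1, hAH.2 (hp.1 x hx)]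
    exact (hl.2 e (List.mem_of_mem_head? he)).2
      (hrel _ ⟨hcyc, hlpH⟩ e (List.mem_append_left _ (List.mem_of_mem_head? he)))

theorem exists_isPendant [Finite G.E] (hA : A.Connected) (hrel : H.ForestRel A) (hAH : A.le H)
    {e : G.E} (he : e ∈ H.edges \ A.edges) :
    ∃ f ∈ H.edges, G.term f ∉ A.verts ∧ H.IsPendant f := by
  obtain ⟨l, hl, hmax⟩ := exists_longest_isOutWalk hrel
  have hl₀ : l ≠ [] := by
    rintro rfl
    simpa using hmax [e] ⟨.singleton e, by simpa using he⟩
  have ha := List.head?_eq_some_head hl₀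
  have hf := List.getLast?_eq_some_getLast hl₀
  rcases hl.init_notMem_or_term_notMem hA hrel hAH ha hf with hv | hw
  · -- reversing the walk swaps its two ends
    have hrev : G.bar (l.head hl₀) ∈ (l.reverse.map G.bar).getLast? := by
      simp [ha]
    refine ⟨G.bar (l.head hl₀), bar_mem_edges_iff.mpr (hl.2 _ (List.head_mem hl₀)).1,
      by rwa [term_bar], ?_⟩
    refine hl.reverse.isPendant_of_longest (fun l' hl' => ?_) hrev (by rwa [term_bar])
    simpa using hmax l' hl'
  · exact ⟨_, (hl.2 _ (List.getLast_mem hl₀)).1, hw, hl.isPendant_of_longest hmax hf hw⟩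

end OutWalk

theorem ForestRel.mono {H K A : Subgraph G} (hrel : H.ForestRel A) (hKH : K.edges ⊆ H.edges) :
    K.ForestRel A :=
  fun l hl => hrel l ⟨hl.1, fun e he => hKH (hl.2 e he)⟩

section ErasePendant

variable {H : Subgraph G} {f : G.E}

theorem IsPendant.init_ne_term (hf : H.IsPendant f) (hfH : f ∈ H.edges) :
    G.init f ≠ G.term f :=
  fun h => G.bar_ne f (hf f hfH h).symm

def erasePendant (H : Subgraph G) (f : G.E) (hf : H.IsPendant f) : Subgraph G where
  verts := H.verts \ {G.term f}
  edges := H.edges \ {f, G.bar f}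
  bar_mem e he := by
    refine ⟨H.bar_mem he.1, fun h => he.2 ?_⟩
    rcases h with h | h
    · exact Or.inr (by rw [← h, G.bar_bar]; rfl)
    · exact Or.inl (bar_injective h)
  init_mem e he := ⟨H.init_mem he.1, fun h => he.2 (Or.inr (hf e he.1 h))⟩

open Classical in
theorem Reaches.erasePendant (hf : H.IsPendant f) (hfH : f ∈ H.edges) {p q : G.V}
    (h : H.Reaches p q) (hq : q ≠ G.term f) :
    (H.erasePendant f hf).Reaches (if p = G.term f then G.init f else p) q := by
  induction h with
  | refl v hv =>
    have hv' : v ∈ (H.erasePendant f hf).verts := ⟨hv, hq⟩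
    simpa [hq] using Reaches.refl v hv'
  | step e he _ ih =>
    specialize ih hq
    by_cases hp : G.init e = G.term f
    · obtain rfl := hf e he hp
      simpa [hp, term_bar, hf.init_ne_term hfH] using ih
    by_cases ht : G.term e = G.term f
    · -- `e` enters the pendant vertex, so it is `f` itself
      obtain rfl : e = f := bar_injective (hf _ (H.bar_mem he) (by rw [← ht]; rfl))
      simpa [hp, ht] using ih
    · have he' : e ∈ (H.erasePendant f hf).edges := by
        refine ⟨he, ?_⟩
        rintro (rfl | h)
        exacts [ht rfl, hp (by rw [Set.mem_singleton_iff.mp h]; rfl)]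
      simpa [hp] using Reaches.step e he' (by simpa [ht] using ih)

theorem Connected.erasePendant (hH : H.Connected) (hf : H.IsPendant f) (hfH : f ∈ H.edges) :
    (H.erasePendant f hf).Connected := by
  refine ⟨⟨G.init f, H.init_mem hfH, hf.init_ne_term hfH⟩, fun p hp q hq => ?_⟩
  have hpf : p ≠ G.term f := hp.2
  simpa [hpf] using (hH.2 p hp.1 q hq.1).erasePendant hf hfH hq.2

theorem ncard_edges_erasePendant_add_two [Finite G.E] (hf : H.IsPendant f) (hfH : f ∈ H.edges) :
    (H.erasePendant f hf).edges.ncard + 2 = H.edges.ncard := by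
  have hpair : {f, G.bar f} ⊆ H.edges := Set.insert_subset hfH (by simpa using H.bar_mem hfH)
  rw [← Set.ncard_pair (G.bar_ne f).symm]
  exact Set.ncard_sdiff_add_ncard_of_subset hpair

theorem eulerChar_erasePendant [Finite G.V] [Finite G.E] (hf : H.IsPendant f)
    (hfH : f ∈ H.edges) : (H.erasePendant f hf).eulerChar = H.eulerChar := by
  have hV : (H.erasePendant f hf).verts.ncard + 1 = H.verts.ncard :=
    Set.ncard_sdiff_singleton_add_one (H.term_mem hfH)
  have hE := ncard_edges_erasePendant_add_two hf hfH
  unfold eulerChar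
  omega

theorem le_erasePendant {A : Subgraph G} (hAH : A.le H) (hf : H.IsPendant f)
    (hfA : G.term f ∉ A.verts) : A.le (H.erasePendant f hf) := by
  refine ⟨fun v hv => ⟨hAH.1 hv, fun h => hfA (h ▸ hv)⟩, fun e he => ⟨hAH.2 he, ?_⟩⟩
  rintro (rfl | h)
  · exact hfA (A.term_mem he)
  · obtain rfl : e = G.bar f := h
    exact hfA (A.init_mem he)

end ErasePendant

theorem Reaches.mem_of_edges_subset {H A : Subgraph G} (hHA : H.edges ⊆ A.edges) {p q : G.V}
    (h : H.Reaches p q) (hp : p ∈ A.verts) : q ∈ A.verts := by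
  induction h with
  | refl => exact hp
  | step e he _ ih => exact ih (A.term_mem (hHA he))

theorem eulerChar_eq_of_edges_subset {H A : Subgraph G} (hH : H.Connected) (hA : A.verts.Nonempty)
    (hAH : A.le H) (hHA : H.edges ⊆ A.edges) : H.eulerChar = A.eulerChar := by
  obtain ⟨a, ha⟩ := hA
  have hV : H.verts = A.verts := Set.Subset.antisymm
    (fun v hv => (hH.2 a (hAH.1 ha) v hv).mem_of_edges_subset hHA ha) hAH.1
  rw [eulerChar, eulerChar, hV, hHA.antisymm hAH.2]

theorem eulerChar_eq_of_forestRel [Finite G.V] [Finite G.E] {H A : Subgraph G}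
    (hH : H.Connected) (hA : A.Connected) (hrel : H.ForestRel A) (hAH : A.le H) :
    H.eulerChar = A.eulerChar := by
  induction hn : H.edges.ncard using Nat.strong_induction_on generalizing H with
  | _ n ih =>
  by_cases hHA : H.edges ⊆ A.edges
  · exact eulerChar_eq_of_edges_subset hH hA.1 hAH hHA
  obtain ⟨e, he⟩ := Set.not_subset.mp hHA
  obtain ⟨f, hfH, hfA, hf⟩ := exists_isPendant hA hrel hAH he
  have hlt : (H.erasePendant f hf).edges.ncard < n := by
    rw [← hn, ← ncard_edges_erasePendant_add_two hf hfH]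
    omega
  rw [← eulerChar_erasePendant hf hfH]
  exact ih _ hlt (hH.erasePendant hf hfH) (hrel.mono Set.sdiff_subset)
    (le_erasePendant hAH hf hfA) rfl

end Subgraph

end SGraph

theorem euler_char_of_relative_tree_general
    (G : SGraph) [Fintype G.V] [Fintype G.E]
    (A : SGraph.Subgraph G)
    (hconn : (G.full).Connected)
    (hAconn : A.Connected)
    (hrel : (G.full).ForestRel A) :
    (G.full).eulerChar = A.eulerChar :=
  SGraph.Subgraph.eulerChar_eq_of_forestRel hconn hAconn hrel
    ⟨Set.subset_univ _, Set.subset_univ _⟩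

/-- If `C` (here: the full subgraph of the finite graph `G`) is
connected, `A` is a nonempty connected subgraph, and `C` is a tree relative to
`A`, then `χ(C) = χ(A)`. -/
theorem euler_char_of_relative_tree
    (G : SGraph) [Fintype G.V] [Fintype G.E]
    (A : SGraph.Subgraph G)
    (hconn : (G.full).Connected)
    (hAne : A.verts.Nonempty)
    (hAconn : A.Connected)
    (hrel : (G.full).ForestRel A) :
    (G.full).eulerChar = A.eulerChar :=
  euler_char_of_relative_tree_general G A hconn hAconn hrel
end

section
/- Let G be a finite nonempty connected directed graph in which every closed walk has exponent sum zero. Then G has a sink vertex and a source vertex. (This is the combinatorial content of the lemma that a finite connected simply connected 2-complex, all of whose 2-cells are attached along paths of exponent sum zero, has sink and source vertices.) -/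
/-- A finite directed graph: edges `E`, vertices `V`, source and target maps. -/
structure DiGraph where
  V : Type
  E : Type
  s : E → V
  t : E → V

namespace DiGraph

variable (G : DiGraph)

/-- A step of a walk: an edge together with a direction
(`true` = forwards, `false` = backwards). -/
def stepStart : G.E × Bool → G.V
  | (e, true) => G.s e
  | (e, false) => G.t e

def stepEnd : G.E × Bool → G.V
  | (e, true) => G.t e
  | (e, false) => G.s e

/-- A walk from `p` to `q`: a list of directed edge-traversals, consecutive
ones matching at endpoints, starting at `p` and ending at `q`. -/
def IsWalk (p q : G.V) (l : List (G.E × Bool)) : Prop :=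
  List.Chain' (fun a b => G.stepEnd a = G.stepStart b) l ∧
    (∀ a, l.head? = some a → G.stepStart a = p) ∧
    (∀ a, l.getLast? = some a → G.stepEnd a = q) ∧
    (l = [] → p = q)

/-- The exponent sum of a walk: forward traversals minus backward traversals. -/
def expSum (l : List (G.E × Bool)) : ℤ :=
  (l.map (fun a => if a.2 then (1 : ℤ) else -1)).sum

/-- The directed graph is connected if any two vertices are joined by a walk
(in the underlying undirected graph). -/
def Connected : Prop := ∀ p q : G.V, ∃ l, G.IsWalk p q l

end DiGraph

/-!
Fix a base vertex `b` and let `h v` be the exponent sum of any walk from `b` to `v`; this is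
well defined because closed walks have exponent sum zero. Each edge `e` raises `h` by one, so
a vertex where `h` is maximal has no outgoing edge (a sink) and one where it is minimal has no
incoming edge (a source).
-/

namespace DiGraph

variable (G : DiGraph)

def IsSink (v : G.V) : Prop := ∀ e : G.E, (G.s e = v ∨ G.t e = v) → G.t e = v

def IsSource (v : G.V) : Prop := ∀ e : G.E, (G.s e = v ∨ G.t e = v) → G.s e = v

def flipStep (a : G.E × Bool) : G.E × Bool := (a.1, !a.2)

def reverseWalk (l : List (G.E × Bool)) : List (G.E × Bool) := l.reverse.map G.flipStep

variable {G}

@[simp]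
lemma stepStart_flipStep (a : G.E × Bool) : G.stepStart (G.flipStep a) = G.stepEnd a := by
  rcases a with ⟨e, _ | _⟩ <;> rfl

@[simp]
lemma stepEnd_flipStep (a : G.E × Bool) : G.stepEnd (G.flipStep a) = G.stepStart a := by
  rcases a with ⟨e, _ | _⟩ <;> rfl

lemma isWalk_edge (e : G.E) : G.IsWalk (G.s e) (G.t e) [(e, true)] :=
  ⟨List.isChain_singleton _, by simp [stepStart], by simp [stepEnd], by simp⟩

lemma IsWalk.append {p q r : G.V} {l m : List (G.E × Bool)}
    (hl : G.IsWalk p q l) (hm : G.IsWalk q r m) : G.IsWalk p r (l ++ m) := by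
  obtain ⟨chain_l, head_l, last_l, nil_l⟩ := hl
  obtain ⟨chain_m, head_m, last_m, nil_m⟩ := hm
  rcases eq_or_ne l [] with rfl | l_ne
  · obtain rfl := nil_l rfl
    exact ⟨chain_m, head_m, last_m, nil_m⟩
  rcases eq_or_ne m [] with rfl | m_ne
  · obtain rfl := nil_m rfl
    simpa using ⟨chain_l, head_l, last_l, nil_l⟩
  refine ⟨?_, fun a ha => ?_, fun a ha => ?_, fun h => ?_⟩
  · refine List.isChain_append.mpr ⟨chain_l, chain_m, fun x hx y hy => ?_⟩
    rw [last_l x hx, head_m y hy]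
  · exact head_l a (by rwa [List.head?_append_of_ne_nil _ l_ne] at ha)
  · exact last_m a (by rwa [List.getLast?_append_of_ne_nil _ m_ne] at ha)
  · exact absurd (List.append_eq_nil_iff.mp h).1 l_ne

lemma IsWalk.reverse {p q : G.V} {l : List (G.E × Bool)} (hl : G.IsWalk p q l) :
    G.IsWalk q p (G.reverseWalk l) := by
  obtain ⟨chain, head, last, nil⟩ := hl
  refine ⟨?_, fun a ha => ?_, fun a ha => ?_, fun h => ?_⟩
  · rw [reverseWalk, List.Chain', List.isChain_map, List.isChain_reverse]
    exact chain.imp fun a b hab => by simpa [flip] using hab.symm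
  · rw [reverseWalk, List.head?_map, List.head?_reverse] at ha
    obtain ⟨b, hb, rfl⟩ := Option.map_eq_some_iff.mp ha
    simpa using last b hb
  · rw [reverseWalk, List.getLast?_map, List.getLast?_reverse] at ha
    obtain ⟨b, hb, rfl⟩ := Option.map_eq_some_iff.mp ha
    simpa using head b hb
  · simp only [reverseWalk, List.map_eq_nil_iff, List.reverse_eq_nil_iff] at h
    exact (nil h).symm

variable (G)

lemma expSum_append (l m : List (G.E × Bool)) : G.expSum (l ++ m) = G.expSum l + G.expSum m := by
  simp [expSum]

lemma expSum_reverseWalk (l : List (G.E × Bool)) : G.expSum (G.reverseWalk l) = -G.expSum l := by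
  induction l with
  | nil => simp [reverseWalk, expSum]
  | cons a l ih =>
    rw [reverseWalk, List.reverse_cons, List.map_append, expSum_append, ← reverseWalk, ih]
    rcases a with ⟨e, _ | _⟩ <;> simp [expSum, flipStep]

lemma expSum_forward (e : G.E) : G.expSum [(e, true)] = 1 := by
  simp [expSum]

lemma exists_potential_of_closed_walks_expSum_zero [Nonempty G.V] (hconn : G.Connected)
    (hzero : ∀ (v : G.V) (l : List (G.E × Bool)), G.IsWalk v v l → G.expSum l = 0) :
    ∃ h : G.V → ℤ, ∀ (p q : G.V) (l : List (G.E × Bool)),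
      G.IsWalk p q l → G.expSum l = h q - h p := by
  obtain ⟨b⟩ := ‹Nonempty G.V›
  choose w hw using hconn b
  refine ⟨fun v => G.expSum (w v), fun p q l hl => ?_⟩
  have closed := hzero b _ ((hw p).append (hl.append (hw q).reverse))
  rw [expSum_append, expSum_append, expSum_reverseWalk] at closed
  linarith

variable {G}

lemma exists_isSink_of_strictMono_along_edges {α : Type*} [LinearOrder α] [Finite G.V]
    [Nonempty G.V] (h : G.V → α) (h_lt : ∀ e, h (G.s e) < h (G.t e)) : ∃ v, G.IsSink v := by
  obtain ⟨v, hv⟩ := Finite.exists_max h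
  refine ⟨v, fun e he => he.resolve_left fun hs => ?_⟩
  exact (h_lt e).not_ge (hs ▸ hv (G.t e))

lemma exists_isSource_of_strictMono_along_edges {α : Type*} [LinearOrder α] [Finite G.V]
    [Nonempty G.V] (h : G.V → α) (h_lt : ∀ e, h (G.s e) < h (G.t e)) : ∃ v, G.IsSource v := by
  obtain ⟨v, hv⟩ := Finite.exists_min h
  refine ⟨v, fun e he => he.resolve_right fun ht => ?_⟩
  exact (h_lt e).not_ge (ht ▸ hv (G.s e))

end DiGraph

theorem exists_sink_and_source_general
    (G : DiGraph) [Fintype G.V] [Nonempty G.V]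
    (hconn : G.Connected)
    (hzero : ∀ (v : G.V) (l : List (G.E × Bool)), G.IsWalk v v l → G.expSum l = 0) :
    (∃ v : G.V, ∀ e : G.E, (G.s e = v ∨ G.t e = v) → G.t e = v) ∧
      (∃ v : G.V, ∀ e : G.E, (G.s e = v ∨ G.t e = v) → G.s e = v) := by
  obtain ⟨h, hh⟩ := G.exists_potential_of_closed_walks_expSum_zero hconn hzero
  have h_lt : ∀ e, h (G.s e) < h (G.t e) := fun e => by
    have := hh _ _ _ (DiGraph.isWalk_edge e)
    rw [DiGraph.expSum_forward] at this
    omega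
  exact ⟨DiGraph.exists_isSink_of_strictMono_along_edges h h_lt,
    DiGraph.exists_isSource_of_strictMono_along_edges h h_lt⟩

/-- A finite nonempty connected directed graph in which every
closed walk has exponent sum zero has a sink vertex and a source vertex. -/
theorem exists_sink_and_source
    (G : DiGraph) [Fintype G.V] [Fintype G.E] [Nonempty G.V]
    (hconn : G.Connected)
    (hzero : ∀ (v : G.V) (l : List (G.E × Bool)), G.IsWalk v v l → G.expSum l = 0) :
    (∃ v : G.V, ∀ e : G.E, (G.s e = v ∨ G.t e = v) → G.t e = v) ∧
      (∃ v : G.V, ∀ e : G.E, (G.s e = v ∨ G.t e = v) → G.s e = v) :=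
  exists_sink_and_source_general G hconn hzero
end
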